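/- arXiv:2009.13104 — 3 statements merged into one kernel-verified Lean document; each statement's English description precedes it below -/
import Mathlib

section
/- Let Q be a neutral mechanism satisfying elementary monotonicity and μ the uniform prior. Then the interim rank shares are non-increasing in rank: for any agent i, any preference P_i, and any k ∈ {1,...,n-1}, q_{i P_i(k)}(P_i) ≥ q_{i P_i(k+1)}(P_i). -/
open Finset

/-- A preference is a ranking: position `k` maps to the `k`-th ranked object.
Objects are identified with `Fin n`. -/
abbrev Pref (n : ℕ) := Fin n ≃ Fin n

/-- `π` first-order stochastically dominates `π'` with respect to `P`. -/
def FOSD {n : ℕ} (P : Pref n) (π π' : Fin n → ℝ) : Prop :=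
  ∀ ℓ : Fin n, ∑ k ∈ Finset.Iic ℓ, π' (P k) ≤ ∑ k ∈ Finset.Iic ℓ, π (P k)

/-- A share vector: a probability distribution over objects. -/
def IsShare {n : ℕ} (π : Fin n → ℝ) : Prop :=
  (∀ a, 0 ≤ π a) ∧ ∑ a, π a = 1

/-- `P'` is an `(a,b)`-swap of `P`: `a` is ranked immediately above `b` in `P`,
they are transposed in `P'`, and all other ranks coincide. -/
def IsSwap {n : ℕ} (P P' : Pref n) (a b : Fin n) : Prop :=
  ∃ (k : Fin n) (hk : k.val + 1 < n),
    P k = a ∧ P ⟨k.val + 1, hk⟩ = b ∧ P' k = b ∧ P' ⟨k.val + 1, hk⟩ = a ∧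
    ∀ j : Fin n, j ≠ k → j ≠ ⟨k.val + 1, hk⟩ → P' j = P j

/-- A mechanism: maps a preference profile to shares `Q prof i a`. -/
abbrev Mech (n : ℕ) := (Fin n → Pref n) → Fin n → Fin n → ℝ

/-- The output of the mechanism is always a bistochastic matrix. -/
def Bistochastic {n : ℕ} (Q : Mech n) : Prop :=
  ∀ prof : Fin n → Pref n,
    (∀ i a, 0 ≤ Q prof i a) ∧ (∀ i, ∑ a, Q prof i a = 1) ∧ (∀ a, ∑ i, Q prof i a = 1)

def StrategyProof {n : ℕ} (Q : Mech n) : Prop :=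
  ∀ (prof : Fin n → Pref n) (i : Fin n) (P' : Pref n),
    FOSD (prof i) (Q prof i) (Q (Function.update prof i P') i)

/-- Elementary monotonicity. -/
def ElemMono {n : ℕ} (Q : Mech n) : Prop :=
  ∀ (prof : Fin n → Pref n) (i : Fin n) (P' : Pref n) (a b : Fin n),
    IsSwap (prof i) P' a b →
      Q prof i b ≤ Q (Function.update prof i P') i b ∧
      Q (Function.update prof i P') i a ≤ Q prof i a

/-- A probability distribution on a finite type. -/
def IsDist {α : Type*} [Fintype α] (ν : α → ℝ) : Prop :=
  (∀ x, 0 ≤ ν x) ∧ ∑ x, ν x = 1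

/-- Build a full profile from agent `i`'s report and the others' profile. -/
def extendProf {n : ℕ} (i : Fin n) (Pi : Pref n)
    (pm : {j : Fin n // j ≠ i} → Pref n) : Fin n → Pref n :=
  fun j => if h : j = i then Pi else pm ⟨j, h⟩

/-- Interim share of object `a` for agent `i` reporting `Pi`, under i.i.d. prior `μ`. -/
noncomputable def interim {n : ℕ} (Q : Mech n) (μ : Pref n → ℝ) (i : Fin n)
    (Pi : Pref n) (a : Fin n) : ℝ :=
  ∑ pm : ({j : Fin n // j ≠ i} → Pref n), (∏ j, μ (pm j)) * Q (extendProf i Pi pm) i a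

/-- Ordinal Bayesian incentive compatibility with respect to prior `μ`. -/
def OBIC {n : ℕ} (Q : Mech n) (μ : Pref n → ℝ) : Prop :=
  ∀ (i : Fin n) (Pi P' : Pref n), FOSD Pi (interim Q μ i Pi) (interim Q μ i P')

/-- The uniform prior over the `n!` preferences. -/
noncomputable def unif (n : ℕ) : Pref n → ℝ := fun _ => (n.factorial : ℝ)⁻¹

/-- Neutrality: relabeling objects by `σ` (so that rank `k` of `P.trans σ` is `σ (P k)`)
permutes the shares accordingly. -/
def Neutral {n : ℕ} (Q : Mech n) : Prop :=
  ∀ (σ : Equiv.Perm (Fin n)) (prof : Fin n → Pref n) (i a : Fin n),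
    Q prof i a = Q (fun j => (prof j).trans σ) i (σ a)

/-!
Relabelling objects by the transposition `σ = (a b)` of two consecutively ranked objects
turns `P` into its `(a,b)`-swap `P.trans σ`. Since the uniform prior is invariant under
relabelling, neutrality gives `q_a(P) = q_b(P.trans σ)`, and elementary monotonicity,
averaged over the other agents, gives `q_b(P) ≤ q_b(P.trans σ)`.
-/

theorem isSwap_trans_swap {n : ℕ} (P : Pref n) (k : Fin n) (hk : k.val + 1 < n) :
    IsSwap P (P.trans (Equiv.swap (P k) (P ⟨k.val + 1, hk⟩))) (P k) (P ⟨k.val + 1, hk⟩) := by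
  refine ⟨k, hk, rfl, rfl, by simp, by simp, fun j hjk hjk' => ?_⟩
  simp [Equiv.swap_apply_of_ne_of_ne (P.injective.ne hjk) (P.injective.ne hjk')]

section extendProf

variable {n : ℕ} (i : Fin n) (P : Pref n) (pm : {j : Fin n // j ≠ i} → Pref n)

@[simp]
theorem extendProf_self : extendProf i P pm i = P := by
  simp [extendProf]

@[simp]
theorem update_extendProf (P' : Pref n) :
    Function.update (extendProf i P pm) i P' = extendProf i P' pm := by
  funext j
  by_cases h : j = i
  · subst h; simp
  · simp [extendProf, h]

theorem extendProf_trans (σ : Equiv.Perm (Fin n)) :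
    (fun j => (extendProf i P pm j).trans σ) =
      extendProf i (P.trans σ) (fun j => (pm j).trans σ) := by
  funext j
  by_cases h : j = i
  · subst h; simp
  · simp [extendProf, h]

end extendProf

theorem interim_le_interim_of_isSwap {n : ℕ} {Q : Mech n} (hM : ElemMono Q)
    {μ : Pref n → ℝ} (hμ : ∀ P, 0 ≤ μ P) (i : Fin n) {P P' : Pref n} {a b : Fin n}
    (hswap : IsSwap P P' a b) : interim Q μ i P b ≤ interim Q μ i P' b := by
  refine Finset.sum_le_sum fun pm _ => ?_
  refine mul_le_mul_of_nonneg_left ?_ (Finset.prod_nonneg fun j _ => hμ (pm j))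
  simpa using (hM (extendProf i P pm) i P' a b (by simpa using hswap)).1

theorem interim_trans {n : ℕ} {Q : Mech n} (hN : Neutral Q) {μ : Pref n → ℝ}
    (σ : Equiv.Perm (Fin n)) (hμ : ∀ P, μ (P.trans σ) = μ P) (i : Fin n) (P : Pref n)
    (a : Fin n) : interim Q μ i P a = interim Q μ i (P.trans σ) (σ a) := by
  -- `Equiv.mulLeft σ P = σ * P = P.trans σ`: relabel every other agent's preference by `σ`.
  refine Fintype.sum_equiv (Equiv.piCongrRight fun _ => Equiv.mulLeft σ) _ _ fun pm => ?_
  rw [hN σ, extendProf_trans]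
  simp only [Equiv.piCongrRight_apply, Pi.map_apply, Equiv.coe_mulLeft, Equiv.Perm.mul_def, hμ]
  rfl

theorem stmt8_general {n : ℕ} (Q : Mech n) (hN : Neutral Q)
    (hM : ElemMono Q) (i : Fin n) (Pi : Pref n) (k : Fin n) (hk : k.val + 1 < n) :
    interim Q (unif n) i Pi (Pi ⟨k.val + 1, hk⟩) ≤ interim Q (unif n) i Pi (Pi k) := by
  set σ := Equiv.swap (Pi k) (Pi ⟨k.val + 1, hk⟩)
  calc interim Q (unif n) i Pi (Pi ⟨k.val + 1, hk⟩)
      ≤ interim Q (unif n) i (Pi.trans σ) (Pi ⟨k.val + 1, hk⟩) :=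
        interim_le_interim_of_isSwap hM (fun _ => by simp [unif]) i (isSwap_trans_swap Pi k hk)
    _ = interim Q (unif n) i Pi (Pi k) := by
        rw [interim_trans hN σ (fun _ => rfl) i Pi (Pi k), Equiv.swap_apply_left]

theorem stmt8 {n : ℕ} (Q : Mech n) (hQ : Bistochastic Q) (hN : Neutral Q)
    (hM : ElemMono Q) (i : Fin n) (Pi : Pref n) (k : Fin n) (hk : k.val + 1 < n) :
    interim Q (unif n) i Pi (Pi ⟨k.val + 1, hk⟩) ≤ interim Q (unif n) i Pi (Pi k) :=
  stmt8_general Q hN hM i Pi k hk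
end

section
/- A mechanism Q is OBIC with respect to a prior μ if and only if its interim shares satisfy interim elementary monotonicity, interim upper invariance, and interim lower invariance. -/
open Finset

/-!
Write `q P := interim Q μ i P` for the interim share vector of the report `P`; since every row
of `Q` sums to `1`, the total `∑ₓ q P x` does not depend on `P`.

If `P'` swaps the objects at ranks `k, k+1` of `P`, the upper contour sets `{P 0, …, P ℓ}` with
`ℓ ≠ k` are the same for `P` and `P'`. OBIC, applied in both directions, therefore makes the
prefix sums of `q P'` and `q P` (in the order `P`) agree at every `ℓ ≠ k` and compare by `≤` at
`k`; differencing consecutive prefix sums gives the three swap conditions.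

Conversely, the swap conditions say that a swap putting `a` back below `b`, where `P` ranks `a`
above `b`, only moves mass from `a` down to `b`, which lowers the share vector in the FOSD order
of `P`. Every report is reached from `P` by a chain of such swaps (induction on the number of
inversions of `P⁻¹ * P'`), so transitivity of FOSD gives OBIC.
-/

open Equiv

theorem CovBy.le_or_le {α : Type*} [LinearOrder α] {k k' : α} (h : k ⋖ k') (x : α) :
    x ≤ k ∨ k' ≤ x :=
  (le_or_gt x k).imp_right h.ge_of_gt

namespace Equiv

section AdjacentTransposition

variable {α : Type*} [LinearOrder α] {k k' : α}

theorem swap_le_iff_of_covBy (h : k ⋖ k') {ℓ : α} (hℓ : ℓ ≠ k) (x : α) :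
    swap k k' x ≤ ℓ ↔ x ≤ ℓ := by
  have hk : k ≤ ℓ ↔ k' ≤ ℓ := ⟨fun hkℓ => h.ge_of_gt (lt_of_le_of_ne hkℓ hℓ.symm),
    fun hk'ℓ => h.le.trans hk'ℓ⟩
  rcases eq_or_ne x k with rfl | hxk
  · simpa using hk.symm
  rcases eq_or_ne x k' with rfl | hxk'
  · simpa using hk
  · rw [swap_apply_of_ne_of_ne hxk hxk']

theorem swap_lt_swap_of_covBy (h : k ⋖ k') {x y : α} (hxy : x < y)
    (hne : ¬(x = k ∧ y = k')) : swap k k' x < swap k k' y := by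
  have := h.lt
  rw [swap_apply_def, swap_apply_def]
  rcases h.le_or_le x with hx | hx <;> rcases h.le_or_le y with hy | hy <;>
    split_ifs <;> subst_vars <;> (try simp only [true_and, and_true, not_true] at hne) <;> order

end AdjacentTransposition

namespace Perm

variable {α : Type*} [LinearOrder α] [Fintype α] {k k' : α}

def inversions (σ : Perm α) : Finset (α × α) :=
  {p | p.1 < p.2 ∧ σ p.2 < σ p.1}

@[simp]
theorem mem_inversions {σ : Perm α} {p : α × α} :
    p ∈ σ.inversions ↔ p.1 < p.2 ∧ σ p.2 < σ p.1 := by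
  simp [inversions]

theorem card_inversions_mul_swap_lt {σ : Perm α} (h : k ⋖ k') (hσ : σ k' < σ k) :
    (σ * swap k k').inversions.card < σ.inversions.card := by
  have hmem : (k, k') ∈ σ.inversions := mem_inversions.2 ⟨h.lt, hσ⟩
  refine lt_of_le_of_lt (Finset.card_le_card_of_injOn (Prod.map (swap k k') (swap k k'))
    ?_ ((swap k k').injective.prodMap (swap k k').injective).injOn)
    (Finset.card_erase_lt_of_mem hmem)
  rintro ⟨x, y⟩ hxy
  rw [Finset.mem_coe, mem_inversions, Perm.mul_apply, Perm.mul_apply] at hxy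
  have hne : ¬(x = k ∧ y = k') := by
    rintro ⟨rfl, rfl⟩
    rw [swap_apply_left, swap_apply_right] at hxy
    exact hσ.asymm hxy.2
  refine Finset.mem_erase.2 ⟨fun hkk' => ?_,
    mem_inversions.2 ⟨swap_lt_swap_of_covBy h hxy.1 hne, hxy.2⟩⟩
  simp only [Prod.map_apply, Prod.mk.injEq, swap_apply_eq_iff, swap_apply_left,
    swap_apply_right] at hkk'
  obtain ⟨rfl, rfl⟩ := hkk'
  exact h.lt.asymm hxy.1

theorem eq_one_of_forall_covBy_le [LocallyFiniteOrder α] {σ : Perm α}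
    (h : ∀ a b, a ⋖ b → σ a ≤ σ b) : σ = 1 :=
  Equiv.ext <| congrFun <|
    (((monotone_iff_forall_covBy σ).2 h).strictMono_of_injective σ.injective).eq_id

theorem induction_on_covBy_inversion [LocallyFiniteOrder α] {p : Perm α → Prop} (one : p 1)
    (step : ∀ σ k k', k ⋖ k' → σ k' < σ k → p (σ * swap k k') → p σ) (σ : Perm α) : p σ := by
  induction hσ : σ.inversions.card using Nat.strong_induction_on generalizing σ with
  | _ N ih =>
    by_cases hdesc : ∃ k k', k ⋖ k' ∧ σ k' < σ k
    · obtain ⟨k, k', h, hlt⟩ := hdesc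
      exact step σ k k' h hlt (ih _ (hσ ▸ card_inversions_mul_swap_lt h hlt) _ rfl)
    · push Not at hdesc
      rw [eq_one_of_forall_covBy_le hdesc]
      exact one

end Perm

end Equiv

section PrefixSums

variable {α G : Type*} [LinearOrder α] [LocallyFiniteOrderBot α] {k k' : α}

theorem sum_Iic_comp_swap_of_covBy [AddCommMonoid G] (h : k ⋖ k') {ℓ : α} (hℓ : ℓ ≠ k)
    (f : α → G) : ∑ j ∈ Iic ℓ, f (swap k k' j) = ∑ j ∈ Iic ℓ, f j :=
  sum_equiv (swap k k') (fun j => by simp only [mem_Iic, swap_le_iff_of_covBy h hℓ])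
    (fun _ _ => rfl)

variable [PredOrder α] [AddCommGroup G] {d : α → G}

theorem sum_Iio_eq_zero_of_covBy (h : k ⋖ k') (hd : ∀ ℓ ≠ k, ∑ j ∈ Iic ℓ, d j = 0)
    {m : α} (hm : m ≠ k') : ∑ j ∈ Iio m, d j = 0 := by
  by_cases hmin : IsMin m
  · rw [hmin.finsetIio_eq, sum_empty]
  · rw [← Iic_pred_eq_Iio_of_not_isMin hmin]
    exact hd _ fun hk => hm ((hk ▸ Order.pred_covBy_of_not_isMin hmin).unique_right h)

theorem eq_zero_of_forall_sum_Iic_eq_zero (h : k ⋖ k') (hd : ∀ ℓ ≠ k, ∑ j ∈ Iic ℓ, d j = 0)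
    {m : α} (hmk : m ≠ k) (hmk' : m ≠ k') : d m = 0 := by
  have := hd m hmk
  rwa [← Iio_insert, sum_insert notMem_Iio_self, sum_Iio_eq_zero_of_covBy h hd hmk',
    add_zero] at this

theorem apply_eq_sum_Iic_of_covBy (h : k ⋖ k') (hd : ∀ ℓ ≠ k, ∑ j ∈ Iic ℓ, d j = 0) :
    d k = ∑ j ∈ Iic k, d j := by
  rw [← Iio_insert, sum_insert notMem_Iio_self, sum_Iio_eq_zero_of_covBy h hd h.lt.ne,
    add_zero]

theorem apply_add_apply_eq_zero_of_covBy (h : k ⋖ k') (hd : ∀ ℓ ≠ k, ∑ j ∈ Iic ℓ, d j = 0) :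
    d k + d k' = 0 := by
  have hIio : Iio k' = Iic k := by ext j; simpa using covBy_iff_lt_iff_le_left.1 h
  have := hd k' h.lt.ne'
  rwa [← Iio_insert, sum_insert notMem_Iio_self, hIio, ← apply_eq_sum_Iic_of_covBy h hd,
    add_comm] at this

end PrefixSums

theorem Fin.covBy_iff_val_add_one {n : ℕ} {k k' : Fin n} : k ⋖ k' ↔ k'.val = k.val + 1 := by
  refine ⟨fun h => ?_, fun h => ⟨Fin.lt_def.2 (by omega), fun c h1 h2 => ?_⟩⟩
  · have := Fin.lt_def.1 h.lt
    by_contra hne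
    exact h.2 (c := ⟨k.val + 1, by omega⟩) (Fin.lt_def.2 (by simp)) (Fin.lt_def.2 (by simp; omega))
  · rw [Fin.lt_def] at h1 h2
    omega

section Swaps

variable {n : ℕ} {P P' : Pref n} {a b : Fin n}

theorem IsSwap.exists_covBy (h : IsSwap P P' a b) :
    ∃ k k' : Fin n, k ⋖ k' ∧ P k = a ∧ P k' = b ∧ P' = P * swap k k' := by
  obtain ⟨k, hk, hPk, hPk', hP'k, hP'k', hrest⟩ := h
  refine ⟨k, ⟨k.val + 1, hk⟩, Fin.covBy_iff_val_add_one.2 rfl, hPk, hPk', Equiv.ext fun j => ?_⟩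
  rw [Perm.mul_apply, swap_apply_def]
  split_ifs with h1 h2
  · rw [h1, hP'k, hPk']
  · rw [h2, hP'k', hPk]
  · exact hrest j h1 h2

theorem IsSwap.symm_lt (h : IsSwap P P' a b) : P.symm a < P.symm b := by
  obtain ⟨k, k', hk, rfl, rfl, -⟩ := h.exists_covBy
  simpa using hk.lt

theorem IsSwap.lt_or_lt (h : IsSwap P P' a b) {x : Fin n} (hxa : x ≠ a) (hxb : x ≠ b) :
    P.symm x < P.symm a ∨ P.symm b < P.symm x := by
  obtain ⟨k, k', hk, rfl, rfl, -⟩ := h.exists_covBy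
  simp only [symm_apply_apply]
  rcases hk.le_or_le (P.symm x) with hx | hx
  · exact .inl (hx.lt_of_ne fun h => hxa (by rw [← h, apply_symm_apply]))
  · exact .inr (hx.lt_of_ne fun h => hxb (by rw [h, apply_symm_apply]))

theorem isSwap_mul_swap {k k' : Fin n} (h : k ⋖ k') : IsSwap P (P * swap k k') (P k) (P k') := by
  have hk' := Fin.covBy_iff_val_add_one.1 h
  have e : (⟨k.val + 1, hk' ▸ k'.isLt⟩ : Fin n) = k' := Fin.ext hk'.symm
  refine ⟨k, hk' ▸ k'.isLt, rfl, by rw [e], by simp, by simp [e], fun j h1 h2 => ?_⟩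
  rw [e] at h2
  rw [Perm.mul_apply, swap_apply_of_ne_of_ne h1 h2]

end Swaps

section Dominance

variable {n : ℕ} {P : Pref n} {π π' π'' : Fin n → ℝ}

theorem FOSD.refl : FOSD P π π := fun _ => le_rfl

theorem FOSD.trans (h : FOSD P π π') (h' : FOSD P π' π'') : FOSD P π π'' :=
  fun ℓ => (h' ℓ).trans (h ℓ)

theorem FOSD.shift_down_of_mul_swap {k k' : Fin n} (h : k ⋖ k') (hP : FOSD P π π')
    (hP' : FOSD (P * swap k k') π' π) :
    π' (P k) ≤ π (P k) ∧ π (P k') ≤ π' (P k') ∧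
      ∀ x, x ≠ P k → x ≠ P k' → π' x = π x := by
  set d : Fin n → ℝ := fun j => π' (P j) - π (P j)
  have hsum (ℓ : Fin n) :
      ∑ j ∈ Iic ℓ, d j = ∑ j ∈ Iic ℓ, π' (P j) - ∑ j ∈ Iic ℓ, π (P j) := sum_sub_distrib ..
  have hd : ∀ ℓ ≠ k, ∑ j ∈ Iic ℓ, d j = 0 := by
    intro ℓ hℓ
    have := hP' ℓ
    simp only [Perm.mul_apply] at this
    rw [sum_Iic_comp_swap_of_covBy h hℓ fun j => π (P j),
      sum_Iic_comp_swap_of_covBy h hℓ fun j => π' (P j)] at this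
    linarith [hP ℓ, hsum ℓ]
  have hk : d k ≤ 0 := by
    rw [apply_eq_sum_Iic_of_covBy h hd, hsum]
    linarith [hP k]
  have hkk' := apply_add_apply_eq_zero_of_covBy h hd
  refine ⟨by linarith, by linarith, fun x hxk hxk' => ?_⟩
  have := eq_zero_of_forall_sum_Iic_eq_zero h hd (m := P.symm x) (by rintro rfl; simp at hxk)
    (by rintro rfl; simp at hxk')
  simpa [d, sub_eq_zero] using this

theorem FOSD.of_shift_down {a b : Fin n} (hab : P.symm a < P.symm b) (ha : π' a ≤ π a)
    (hab_sum : π' a + π' b = π a + π b) (hrest : ∀ x, x ≠ a → x ≠ b → π' x = π x) :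
    FOSD P π π' := by
  intro ℓ
  set d : Fin n → ℝ := fun x => π' x - π x
  have hd (j : Fin n) : d (P j) =
      (if P.symm a = j then d a else 0) + (if P.symm b = j then d b else 0) := by
    rcases eq_or_ne (P.symm a) j with rfl | hja
    · simp [show b ≠ a by rintro rfl; exact hab.ne rfl]
    rcases eq_or_ne (P.symm b) j with rfl | hjb
    · simp [hja]
    rw [if_neg hja, if_neg hjb, add_zero]
    simp only [d, hrest (P j) (by rintro rfl; simp at hja) (by rintro rfl; simp at hjb), sub_self]
  have hsum : ∑ j ∈ Iic ℓ, d (P j) =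
      (if P.symm a ∈ Iic ℓ then d a else 0) + (if P.symm b ∈ Iic ℓ then d b else 0) := by
    rw [sum_congr rfl fun j _ => hd j, sum_add_distrib, sum_ite_eq, sum_ite_eq]
  have hle : ∑ j ∈ Iic ℓ, d (P j) ≤ 0 := by
    rw [hsum]
    simp only [mem_Iic, d]
    split_ifs with h₁ h₂ h₂ <;> first | linarith | exact absurd (hab.trans_le h₂).le h₁
  simp only [d, sum_sub_distrib] at hle
  linarith

end Dominance

section ShareFamily

variable {n : ℕ} (q : Pref n → Fin n → ℝ)

def SwapMonotone : Prop :=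
  ∀ (P P' : Pref n) (a b : Fin n), IsSwap P P' a b → q P b ≤ q P' b ∧ q P' a ≤ q P a

def SwapUpperInvariant : Prop :=
  ∀ (P P' : Pref n) (a b : Fin n), IsSwap P P' a b →
    ∀ x, P.symm x < P.symm a → q P' x = q P x

def SwapLowerInvariant : Prop :=
  ∀ (P P' : Pref n) (a b : Fin n), IsSwap P P' a b →
    ∀ x, P.symm b < P.symm x → q P' x = q P x

variable {q}

theorem swap_conditions_of_forall_fosd (h : ∀ P P', FOSD P (q P) (q P')) :
    SwapMonotone q ∧ SwapUpperInvariant q ∧ SwapLowerInvariant q := by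
  have key : ∀ P P' a b, IsSwap P P' a b →
      (q P b ≤ q P' b ∧ q P' a ≤ q P a) ∧ ∀ x, x ≠ a → x ≠ b → q P' x = q P x := by
    intro P P' a b hs
    obtain ⟨k, k', hk, rfl, rfl, rfl⟩ := hs.exists_covBy
    obtain ⟨ha, hb, hrest⟩ := FOSD.shift_down_of_mul_swap hk (h P _) (h _ P)
    exact ⟨⟨hb, ha⟩, hrest⟩
  refine ⟨fun P P' a b hs => (key P P' a b hs).1, fun P P' a b hs x hx => ?_,
    fun P P' a b hs x hx => ?_⟩
  · exact (key P P' a b hs).2 x (by rintro rfl; exact hx.false)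
      (by rintro rfl; exact hx.asymm hs.symm_lt)
  · exact (key P P' a b hs).2 x (by rintro rfl; exact hx.asymm hs.symm_lt)
      (by rintro rfl; exact hx.false)

theorem fosd_of_isSwap (hq : ∀ P P', ∑ x, q P x = ∑ x, q P' x) (hm : SwapMonotone q)
    (hu : SwapUpperInvariant q) (hl : SwapLowerInvariant q) {P P' P'' : Pref n} {a b : Fin n}
    (hs : IsSwap P' P'' a b) (hab : P.symm a < P.symm b) : FOSD P (q P') (q P'') := by
  have hrest : ∀ x, x ≠ a → x ≠ b → q P'' x = q P' x := fun x hxa hxb =>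
    (hs.lt_or_lt hxa hxb).elim (hu _ _ _ _ hs x) (hl _ _ _ _ hs x)
  have hab_sum : q P'' a + q P'' b = q P' a + q P' b := by
    have := Fintype.sum_eq_add (f := fun x => q P'' x - q P' x) a b
      (by rintro rfl; exact hab.false) fun x hx => sub_eq_zero.2 (hrest x hx.1 hx.2)
    rw [Finset.sum_sub_distrib, hq, sub_self] at this
    linarith
  exact FOSD.of_shift_down hab (hm _ _ _ _ hs).2 hab_sum hrest

theorem forall_fosd_of_swap_conditions (hq : ∀ P P', ∑ x, q P x = ∑ x, q P' x)
    (hm : SwapMonotone q) (hu : SwapUpperInvariant q) (hl : SwapLowerInvariant q)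
    (P P' : Pref n) : FOSD P (q P) (q P') := by
  suffices ∀ σ : Perm (Fin n), FOSD P (q P) (q (P * σ)) by
    simpa using this (P⁻¹ * P')
  intro σ
  induction σ using Perm.induction_on_covBy_inversion with
  | one => simpa using FOSD.refl
  | step σ k k' hk hσ ih =>
    have hs : IsSwap (P * σ * swap k k') (P * σ) (P (σ k')) (P (σ k)) := by
      simpa [mul_assoc] using isSwap_mul_swap (P := P * σ * swap k k') hk
    exact ih.trans (fosd_of_isSwap hq hm hu hl hs (by simpa using hσ))

theorem forall_fosd_iff (hq : ∀ P P', ∑ x, q P x = ∑ x, q P' x) :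
    (∀ P P', FOSD P (q P) (q P')) ↔
      SwapMonotone q ∧ SwapUpperInvariant q ∧ SwapLowerInvariant q :=
  ⟨swap_conditions_of_forall_fosd, fun ⟨hm, hu, hl⟩ => forall_fosd_of_swap_conditions hq hm hu hl⟩

end ShareFamily

theorem sum_interim {n : ℕ} {Q : Mech n} (hQ : Bistochastic Q) (μ : Pref n → ℝ) (i : Fin n)
    (P : Pref n) : ∑ a, interim Q μ i P a = ∑ pm : {j // j ≠ i} → Pref n, ∏ j, μ (pm j) := by
  unfold interim
  rw [Finset.sum_comm]
  refine Finset.sum_congr rfl fun pm _ => ?_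
  rw [← Finset.mul_sum, (hQ _).2.1 i, mul_one]

theorem stmt10_general {n : ℕ} (Q : Mech n) (hQ : Bistochastic Q)
    (μ : Pref n → ℝ) :
    OBIC Q μ ↔
      ((∀ (i : Fin n) (Pi P' : Pref n) (a b : Fin n), IsSwap Pi P' a b →
          interim Q μ i Pi b ≤ interim Q μ i P' b ∧
          interim Q μ i P' a ≤ interim Q μ i Pi a) ∧
       (∀ (i : Fin n) (Pi P' : Pref n) (a b : Fin n), IsSwap Pi P' a b →
          ∀ x : Fin n, Pi.symm x < Pi.symm a →
            interim Q μ i P' x = interim Q μ i Pi x) ∧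
       (∀ (i : Fin n) (Pi P' : Pref n) (a b : Fin n), IsSwap Pi P' a b →
          ∀ x : Fin n, Pi.symm b < Pi.symm x →
            interim Q μ i P' x = interim Q μ i Pi x)) := by
  have key (i : Fin n) := forall_fosd_iff (q := interim Q μ i) fun P P' => by
    rw [sum_interim hQ, sum_interim hQ]
  exact (forall_congr' key).trans (by simp only [SwapMonotone, SwapUpperInvariant,
    SwapLowerInvariant, forall_and])

theorem stmt10 {n : ℕ} (Q : Mech n) (hQ : Bistochastic Q)
    (μ : Pref n → ℝ) (hμ : IsDist μ) :
    OBIC Q μ ↔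
      ((∀ (i : Fin n) (Pi P' : Pref n) (a b : Fin n), IsSwap Pi P' a b →
          interim Q μ i Pi b ≤ interim Q μ i P' b ∧
          interim Q μ i P' a ≤ interim Q μ i Pi a) ∧
       (∀ (i : Fin n) (Pi P' : Pref n) (a b : Fin n), IsSwap Pi P' a b →
          ∀ x : Fin n, Pi.symm x < Pi.symm a →
            interim Q μ i P' x = interim Q μ i Pi x) ∧
       (∀ (i : Fin n) (Pi P' : Pref n) (a b : Fin n), IsSwap Pi P' a b →
          ∀ x : Fin n, Pi.symm b < Pi.symm x →
            interim Q μ i P' x = interim Q μ i Pi x)) :=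
  stmt10_general Q hQ μ
end

section
/- Let Q be a mechanism satisfying ex-post upper invariance, ex-post lower invariance, and elementary monotonicity. Then for every agent i, every P_{-i}, and every (a,b)-swap P'_i of P_i, the share vectors satisfy both Q_i(P_i,P_{-i}) FOSD Q_i(P'_i,P_{-i}) with respect to P_i and Q_i(P'_i,P_{-i}) FOSD Q_i(P_i,P_{-i}) with respect to P'_i. -/
open Finset

/-! Upper and lower invariance fix every share other than those of `a` and `b`, and since rows
sum to one, the two shares of `a` and `b` have the same total before and after the swap. Hence
the cumulative sums along either preference can differ only at the rank of the first of the two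
swapped objects, where elementary monotonicity gives the right sign. -/

theorem Finset.sum_Iic_nonneg_of_eq_zero_off_pair {ι M : Type*} [Preorder ι]
    [LocallyFiniteOrderBot ι] [AddCommMonoid M] [Preorder M] {f : ι → M} {i j : ι}
    (hij : i < j) (hf : ∀ x, x ≠ i → x ≠ j → f x = 0) (hi : 0 ≤ f i) (hsum : f i + f j = 0)
    (ℓ : ι) : 0 ≤ ∑ x ∈ Iic ℓ, f x := by
  by_cases hjℓ : j ≤ ℓ
  · rw [sum_eq_add_of_mem i j (mem_Iic.2 (hij.le.trans hjℓ)) (mem_Iic.2 hjℓ) hij.ne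
      fun x _ hx => hf x hx.1 hx.2, hsum]
  by_cases hiℓ : i ≤ ℓ
  · rwa [sum_eq_single_of_mem i (mem_Iic.2 hiℓ) fun x hx hxi =>
      hf x hxi (by rintro rfl; exact hjℓ (mem_Iic.1 hx))]
  · rw [sum_eq_zero fun x hx => hf x (by rintro rfl; exact hiℓ (mem_Iic.1 hx))
      (by rintro rfl; exact hjℓ (mem_Iic.1 hx))]

theorem Fintype.add_eq_add_of_sum_eq {ι M : Type*} [Fintype ι] [AddCommGroup M]
    {f g : ι → M} {a b : ι} (hab : a ≠ b) (hfg : ∀ x, x ≠ a → x ≠ b → f x = g x)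
    (hsum : ∑ x, f x = ∑ x, g x) : f a + f b = g a + g b := by
  have hdiff : ∑ x, (f - g) x = (f - g) a + (f - g) b :=
    Fintype.sum_eq_add a b hab fun x hx => sub_eq_zero.2 (hfg x hx.1 hx.2)
  simp only [Pi.sub_apply, Finset.sum_sub_distrib, hsum, sub_self] at hdiff
  rw [← sub_eq_zero, hdiff]
  abel

theorem FOSD.of_eq_off_pair {n : ℕ} {P : Pref n} {π π' : Fin n → ℝ} {k k' : Fin n}
    (hkk' : k < k') (hout : ∀ x, x ≠ P k → x ≠ P k' → π x = π' x) (hk : π' (P k) ≤ π (P k))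
    (hsum : π (P k) + π (P k') = π' (P k) + π' (P k')) : FOSD P π π' := by
  intro ℓ
  rw [← sub_nonneg, ← sum_sub_distrib]
  refine sum_Iic_nonneg_of_eq_zero_off_pair hkk' (fun j hj hj' => ?_) (sub_nonneg.2 hk)
    (by linear_combination hsum) ℓ
  exact sub_eq_zero.2 (hout _ (P.injective.ne hj) (P.injective.ne hj'))

theorem IsSwap.ne {n : ℕ} {P P' : Pref n} {a b : Fin n} (h : IsSwap P P' a b) : a ≠ b := by
  obtain ⟨k, hk, rfl, rfl, -⟩ := h
  exact P.injective.ne (Fin.ne_of_val_ne (Nat.ne_add_one _))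

theorem IsSwap.lt_or_lt_of_ne {n : ℕ} {P P' : Pref n} {a b x : Fin n} (h : IsSwap P P' a b)
    (hxa : x ≠ a) (hxb : x ≠ b) : P.symm x < P.symm a ∨ P.symm b < P.symm x := by
  obtain ⟨k, hk, rfl, rfl, -⟩ := h
  have hxk : P.symm x ≠ k := fun h => hxa (by rw [← h, P.apply_symm_apply])
  have hxk' : P.symm x ≠ ⟨k + 1, hk⟩ := fun h => hxb (by rw [← h, P.apply_symm_apply])
  rw [Ne, Fin.ext_iff] at hxk hxk'
  simp only [Equiv.symm_apply_apply, Fin.lt_def] at hxk' ⊢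
  omega

theorem stmt17 {n : ℕ} (Q : Mech n) (hQ : Bistochastic Q)
    (hUI : ∀ (prof : Fin n → Pref n) (i : Fin n) (P' : Pref n) (a b : Fin n),
      IsSwap (prof i) P' a b →
      ∀ x : Fin n, (prof i).symm x < (prof i).symm a →
        Q (Function.update prof i P') i x = Q prof i x)
    (hLI : ∀ (prof : Fin n → Pref n) (i : Fin n) (P' : Pref n) (a b : Fin n),
      IsSwap (prof i) P' a b →
      ∀ x : Fin n, (prof i).symm b < (prof i).symm x →
        Q (Function.update prof i P') i x = Q prof i x)
    (hEM : ElemMono Q) :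
    ∀ (prof : Fin n → Pref n) (i : Fin n) (P' : Pref n) (a b : Fin n),
      IsSwap (prof i) P' a b →
      FOSD (prof i) (Q prof i) (Q (Function.update prof i P') i) ∧
      FOSD P' (Q (Function.update prof i P') i) (Q prof i) := by
  intro prof i P' a b hswap
  have hagree : ∀ x, x ≠ a → x ≠ b → Q (Function.update prof i P') i x = Q prof i x :=
    fun x hxa hxb => (hswap.lt_or_lt_of_ne hxa hxb).elim
      (hUI prof i P' a b hswap x) (hLI prof i P' a b hswap x)
  have hpair : Q prof i a + Q prof i b =
      Q (Function.update prof i P') i a + Q (Function.update prof i P') i b :=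
    Fintype.add_eq_add_of_sum_eq hswap.ne (fun x hxa hxb => (hagree x hxa hxb).symm)
      (((hQ prof).2.1 i).trans ((hQ _).2.1 i).symm)
  obtain ⟨hb, ha⟩ := hEM prof i P' a b hswap
  obtain ⟨k, hk, hPa, hPb, hP'b, hP'a, -⟩ := hswap
  have hkk' : k < ⟨k + 1, hk⟩ := Fin.lt_def.2 (Nat.lt_add_one _)
  constructor
  · refine FOSD.of_eq_off_pair hkk' (fun x hxa hxb => ?_) (hPa ▸ ha) (hPa ▸ hPb ▸ hpair)
    exact (hagree x (hPa ▸ hxa) (hPb ▸ hxb)).symm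
  · refine FOSD.of_eq_off_pair hkk' (fun x hxb hxa => ?_) (hP'b ▸ hb)
      (hP'a ▸ hP'b ▸ by linear_combination hpair.symm)
    exact hagree x (hP'a ▸ hxa) (hP'b ▸ hxb)
end
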